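/- Let q be an odd prime power. If q ≡ 1 (mod 4), then the point ⟨(0,0,1)⟩ is H-covered. If q ≡ 3 (mod 4), then the point ⟨(0,0,1)⟩ is H-free. -/

import Mathlib

noncomputable section

/-- Three points of PG(2,q) are collinear if they have linearly dependent representatives. -/
def Coll3 {F : Type*} [Field F] (P Q R : Projectivization F (Fin 3 → F)) : Prop :=
  ¬ LinearIndependent F ![P.rep, Q.rep, R.rep]

/-- A point is `S`-covered if it lies on a line through two distinct points of `S`. -/
def PGCovered {F : Type*} [Field F] (S : Set (Projectivization F (Fin 3 → F)))
    (P : Projectivization F (Fin 3 → F)) : Prop :=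
  ∃ Q ∈ S, ∃ R ∈ S, Q ≠ R ∧ Coll3 P Q R

/-- A point not in `S` is `S`-free if it is not `S`-covered. -/
def PGFree {F : Type*} [Field F] (S : Set (Projectivization F (Fin 3 → F)))
    (P : Projectivization F (Fin 3 → F)) : Prop :=
  P ∉ S ∧ ¬ PGCovered S P

lemma vec_ne_zero {F : Type*} [Field F] (v : Fin 3 → F) (i : Fin 3) (h : v i ≠ 0) : v ≠ 0 :=
  fun hv => h (by simp [hv])

/-- The set `H = {⟨(1,s⁴,s²)⟩ : s ∈ F}` of points of PG(2,q). -/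
def HSet (F : Type*) [Field F] : Set (Projectivization F (Fin 3 → F)) :=
  {P | ∃ s : F, P = Projectivization.mk F ![1, s ^ 4, s ^ 2] (vec_ne_zero _ 0 (by simp))}

/-- The conic `C : XY = Z²` in PG(2,q).  (Membership does not depend on the choice of
representative since the equation is homogeneous.) -/
def conicC (F : Type*) [Field F] : Set (Projectivization F (Fin 3 → F)) :=
  {P | P.rep 0 * P.rep 1 = P.rep 2 ^ 2}

/-- An arc: a set of points no three of which are collinear. -/
def IsPGArc {F : Type*} [Field F] (S : Set (Projectivization F (Fin 3 → F))) : Prop :=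
  ∀ P ∈ S, ∀ Q ∈ S, ∀ R ∈ S, P ≠ Q → P ≠ R → Q ≠ R → ¬ Coll3 P Q R

/-- A complete arc: an arc which cannot be extended to a larger arc. -/
def IsCompletePGArc {F : Type*} [Field F] (S : Set (Projectivization F (Fin 3 → F))) : Prop :=
  IsPGArc S ∧ ∀ P ∉ S, ¬ IsPGArc (insert P S)

/-!
The line joining `⟨(0,0,1)⟩` to `⟨(1,A,a)⟩` is `Y = A X`, so `⟨(0,0,1)⟩` lies on the line
through two points `⟨(1,s⁴,s²)⟩ ≠ ⟨(1,t⁴,t²)⟩` of `H` exactly when `s⁴ = t⁴` but `s² ≠ t²`,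
i.e. `s² = -t² ≠ 0`. Such `s, t` exist iff `-1` is a square in `F_q`, that is iff `q ≡ 1 (mod 4)`.
-/

open Projectivization

section Collinearity

variable {F : Type*} [Field F]

lemma coll3_mk_iff_det_eq_zero {u v w : Fin 3 → F} (hu : u ≠ 0) (hv : v ≠ 0) (hw : w ≠ 0) :
    Coll3 (mk F u hu) (mk F v hv) (mk F w hw) ↔ Matrix.det (Matrix.of ![u, v, w]) = 0 := by
  obtain ⟨a, ha⟩ := exists_smul_eq_mk_rep F u hu
  obtain ⟨b, hb⟩ := exists_smul_eq_mk_rep F v hv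
  obtain ⟨c, hc⟩ := exists_smul_eq_mk_rep F w hw
  have hrep : ![(mk F u hu).rep, (mk F v hv).rep, (mk F w hw).rep] = ![a, b, c] • ![u, v, w] := by
    ext i : 1
    fin_cases i <;> simp [← ha, ← hb, ← hc]
  have hrows := Matrix.linearIndependent_rows_iff_isUnit (A := Matrix.of ![u, v, w])
  rw [Matrix.isUnit_iff_isUnit_det, isUnit_iff_ne_zero] at hrows
  rw [Coll3, hrep, LinearIndependent.units_smul_iff]
  exact (not_congr hrows).trans not_not

lemma mk_one_eq_mk_one_iff (A a B b : F) :
    mk F ![1, A, a] (vec_ne_zero _ 0 (by simp)) = mk F ![1, B, b] (vec_ne_zero _ 0 (by simp)) ↔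
      A = B ∧ a = b := by
  rw [mk_eq_mk_iff']
  constructor
  · rintro ⟨c, hc⟩
    have h0 := congrFun hc 0
    have h1 := congrFun hc 1
    have h2 := congrFun hc 2
    simp only [Pi.smul_apply, smul_eq_mul, Matrix.cons_val_zero, Matrix.cons_val_one,
      Matrix.cons_val_two, Matrix.head_cons, Matrix.tail_cons, mul_one] at h0 h1 h2
    subst h0
    rw [one_mul] at h1 h2
    exact ⟨h1.symm, h2.symm⟩
  · rintro ⟨rfl, rfl⟩
    exact ⟨1, one_smul F _⟩

lemma mk_zero_zero_one_ne_mk_one (A a : F) :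
    mk F ![0, 0, 1] (vec_ne_zero _ 2 (by simp)) ≠ mk F ![1, A, a] (vec_ne_zero _ 0 (by simp)) := by
  rw [Ne, mk_eq_mk_iff']
  rintro ⟨c, hc⟩
  have h0 := congrFun hc 0
  have h2 := congrFun hc 2
  simp only [Pi.smul_apply, smul_eq_mul, Matrix.cons_val_zero, Matrix.cons_val_two,
    Matrix.head_cons, Matrix.tail_cons, mul_one] at h0 h2
  simp [h0] at h2

lemma coll3_mk_zero_zero_one_iff (A a B b : F) :
    Coll3 (mk F ![0, 0, 1] (vec_ne_zero _ 2 (by simp)))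
      (mk F ![1, A, a] (vec_ne_zero _ 0 (by simp))) (mk F ![1, B, b] (vec_ne_zero _ 0 (by simp))) ↔
      A = B := by
  rw [coll3_mk_iff_det_eq_zero, Matrix.det_fin_three]
  simp [sub_eq_zero, eq_comm]

end Collinearity

section HSet

variable {F : Type*} [Field F]

lemma mk_hSet_eq_mk_hSet_iff (s t : F) :
    mk F ![1, s ^ 4, s ^ 2] (vec_ne_zero _ 0 (by simp)) =
        mk F ![1, t ^ 4, t ^ 2] (vec_ne_zero _ 0 (by simp)) ↔ s ^ 2 = t ^ 2 := by
  rw [mk_one_eq_mk_one_iff, and_iff_right_iff_imp]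
  intro h
  rw [show s ^ 4 = (s ^ 2) ^ 2 by ring, h]
  ring

lemma mk_zero_zero_one_not_mem_hSet :
    mk F ![0, 0, 1] (vec_ne_zero _ 2 (by simp)) ∉ HSet F := by
  rintro ⟨s, hs⟩
  exact mk_zero_zero_one_ne_mk_one _ _ hs

lemma isSquare_neg_one_of_pgCovered_hSet
    (h : PGCovered (HSet F) (mk F ![0, 0, 1] (vec_ne_zero _ 2 (by simp)))) :
    IsSquare (-1 : F) := by
  obtain ⟨_, ⟨s, rfl⟩, _, ⟨t, rfl⟩, hne, hcoll⟩ := h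
  rw [Ne, mk_hSet_eq_mk_hSet_iff] at hne
  rw [coll3_mk_zero_zero_one_iff] at hcoll
  have hsum : s ^ 2 + t ^ 2 = 0 := by
    have : (s ^ 2 - t ^ 2) * (s ^ 2 + t ^ 2) = 0 := by linear_combination hcoll
    exact (mul_eq_zero.1 this).resolve_left (sub_ne_zero.2 hne)
  have ht : t ≠ 0 := by
    rintro rfl
    exact hne (by linear_combination hsum)
  exact ⟨s / t, by field_simp; linear_combination -hsum⟩

lemma pgCovered_hSet_of_isSquare_neg_one (h2 : (2 : F) ≠ 0) (h : IsSquare (-1 : F)) :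
    PGCovered (HSet F) (mk F ![0, 0, 1] (vec_ne_zero _ 2 (by simp))) := by
  obtain ⟨r, hr⟩ := h
  refine ⟨_, ⟨r, rfl⟩, _, ⟨1, rfl⟩, ?_, ?_⟩
  · rw [Ne, mk_hSet_eq_mk_hSet_iff]
    intro h
    exact h2 (by linear_combination -h - hr)
  · rw [coll3_mk_zero_zero_one_iff]
    linear_combination (1 - r ^ 2) * hr

end HSet

/-- if `q ≡ 1 (mod 4)` the point `⟨(0,0,1)⟩` is `H`-covered; if `q ≡ 3 (mod 4)`
it is `H`-free. -/
theorem stmt7 (F : Type*) [Field F] [Fintype F] (q : ℕ) (hcard : Fintype.card F = q) :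
    (q % 4 = 1 →
      PGCovered (HSet F) (Projectivization.mk F ![0, 0, 1] (vec_ne_zero _ 2 (by simp)))) ∧
    (q % 4 = 3 →
      PGFree (HSet F) (Projectivization.mk F ![0, 0, 1] (vec_ne_zero _ 2 (by simp)))) := by
  subst hcard
  refine ⟨fun hq => ?_, fun hq => ⟨mk_zero_zero_one_not_mem_hSet, fun hcov => ?_⟩⟩
  · have hchar : ringChar F ≠ 2 := fun h => by
      have := FiniteField.even_card_iff_char_two.1 h
      omega
    exact pgCovered_hSet_of_isSquare_neg_one (Ring.two_ne_zero hchar)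
      (FiniteField.isSquare_neg_one_iff.2 (by omega))
  · exact FiniteField.isSquare_neg_one_iff.1 (isSquare_neg_one_of_pgCovered_hSet hcov) hq
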